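/- Every symmetric e-merging function F is dominated by λ + (1−λ)·M_K for some λ ∈ [0,1], where M_K is the arithmetic mean; moreover F is admissible if and only if F = λ + (1−λ)·M_K with λ = F(0,…,0). -/

import Mathlib

open MeasureTheory
open scoped ENNReal NNReal BigOperators

/-- An e-merging function: an increasing Borel function `F : [0,∞)^K → [0,∞)` mapping
any `K` arbitrarily dependent e-variables to an e-variable. -/
def IsEMerging (K : ℕ) (F : (Fin K → ℝ) → ℝ) : Prop :=
  Monotone F ∧ Measurable F ∧ (∀ e, 0 ≤ F e) ∧
  ∀ (Ω : Type) [MeasurableSpace Ω] (Q : Measure Ω), IsProbabilityMeasure Q →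
    ∀ E : Fin K → Ω → ℝ, (∀ k, Measurable (E k)) → (∀ k ω, 0 ≤ E k ω) →
      (∀ k, ∫⁻ ω, ENNReal.ofReal (E k ω) ∂Q ≤ 1) →
      ∫⁻ ω, ENNReal.ofReal (F (fun k => E k ω)) ∂Q ≤ 1

/-- `G` strictly dominates `F` (as e-merging functions, on the domain `[0,∞)^K`). -/
def StrictlyDominates (K : ℕ) (G F : (Fin K → ℝ) → ℝ) : Prop :=
  (∀ e : Fin K → ℝ, (∀ k, 0 ≤ e k) → F e ≤ G e) ∧
  (∃ e : Fin K → ℝ, (∀ k, 0 ≤ e k) ∧ F e < G e)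

/-- An e-merging function is admissible if no e-merging function strictly dominates it. -/
def IsAdmissibleEMerging (K : ℕ) (F : (Fin K → ℝ) → ℝ) : Prop :=
  IsEMerging K F ∧ ¬ ∃ G, IsEMerging K G ∧ StrictlyDominates K G F

/-!
Averaging over the cyclic rotations of the coordinates, the e-merging property of `F` on a
mixture of two points `e`, `f` with weights `t`, `1 - t` only needs
`t M(e) + (1 - t) M(f) ≤ 1`; for symmetric `F` it yields `t F(e) + (1 - t) F(f) ≤ 1`.
Applied with `M(f) ≤ 1 ≤ M(e)`, this says that the slopes `(F - M) / (1 - M)` below the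
hyperplane `M = 1` lie below those above it, and a separating value `λ`, clipped to `[0, 1]`,
gives `F ≤ λ + (1 - λ) M`. As `λ + (1 - λ) M` is itself e-merging, an admissible `F` equals it.
Conversely, if `F = λ + (1 - λ) M` and `G ≥ F` with `G(e) > F(e)`, mixing the rotations of `e`
with a constant vector gives every coordinate mean `1` and `F` mean `1`, so `G` has mean `> 1`.
-/

theorem ENNReal.ofReal_sum_mul {ι : Type*} (s : Finset ι) {w x : ι → ℝ}
    (hw : ∀ j, 0 ≤ w j) (hx : ∀ j, 0 ≤ x j) :
    ENNReal.ofReal (∑ j ∈ s, w j * x j) =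
      ∑ j ∈ s, ENNReal.ofReal (w j) * ENNReal.ofReal (x j) := by
  rw [ENNReal.ofReal_sum_of_nonneg fun j _ => mul_nonneg (hw j) (hx j)]
  exact Finset.sum_congr rfl fun j _ => ENNReal.ofReal_mul (hw j)

theorem exists_forall_le_mul_of_cross {X : Type*} {s : Set X} {g d : X → ℝ}
    (hcross : ∀ x ∈ s, ∀ y ∈ s, 0 ≤ d x → d y ≤ 0 → d x * g y ≤ d y * g x)
    {x₀ x₁ : X} (hx₀ : x₀ ∈ s) (hd₀ : 0 < d x₀) (hx₁ : x₁ ∈ s) (hd₁ : d x₁ < 0) :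
    ∃ l, g x₀ / d x₀ ≤ l ∧ ∀ x ∈ s, g x ≤ l * d x := by
  -- the ratios `g / d` on `{d > 0}` lie below those on `{d < 0}`; take their supremum
  set S := (fun x => g x / d x) '' {x ∈ s | 0 < d x}
  have hS_le : ∀ y ∈ s, d y < 0 → ∀ r ∈ S, r ≤ g y / d y := by
    rintro y hy hdy _ ⟨x, ⟨hx, hdx⟩, rfl⟩
    rw [div_le_iff₀ hdx, div_mul_eq_mul_div, le_div_iff_of_neg hdy]
    linarith [hcross x hx y hy hdx.le hdy.le]
  have hS : BddAbove S := ⟨_, hS_le x₁ hx₁ hd₁⟩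
  refine ⟨sSup S, le_csSup hS ⟨x₀, ⟨hx₀, hd₀⟩, rfl⟩, fun x hx => ?_⟩
  rcases lt_trichotomy (d x) 0 with hdx | hdx | hdx
  · rw [← le_div_iff_of_neg hdx]
    exact csSup_le ⟨_, x₀, ⟨hx₀, hd₀⟩, rfl⟩ (hS_le x hx hdx)
  · have h := hcross x₀ hx₀ x hx hd₀.le hdx.le
    rw [hdx, zero_mul] at h
    rw [hdx, mul_zero]
    nlinarith
  · rw [← div_le_iff₀ hdx]
    exact le_csSup hS ⟨x, ⟨hx, hdx⟩, rfl⟩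

variable {K : ℕ}

/-- The arithmetic mean `M_K`. -/
noncomputable def arithMean (e : Fin K → ℝ) : ℝ := (∑ k, e k) / K

noncomputable def cyclicAverage [NeZero K] (G : (Fin K → ℝ) → ℝ) (e : Fin K → ℝ) : ℝ :=
  (∑ i, G (e ∘ Equiv.addLeft i)) / K

theorem arithMean_comp_perm (e : Fin K → ℝ) (σ : Equiv.Perm (Fin K)) :
    arithMean (e ∘ σ) = arithMean e := by
  simp only [arithMean, Function.comp_apply, Equiv.sum_comp σ e]

theorem arithMean_const [NeZero K] (c : ℝ) : arithMean (fun _ : Fin K => c) = c := by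
  simp [arithMean, NeZero.ne K]

theorem arithMean_nonneg {e : Fin K → ℝ} (he : 0 ≤ e) : 0 ≤ arithMean e :=
  div_nonneg (Finset.sum_nonneg fun k _ => he k) K.cast_nonneg

theorem Fin.sum_apply_add_right [NeZero K] (e : Fin K → ℝ) (k : Fin K) :
    ∑ i, e (i + k) = ∑ i, e i :=
  Equiv.sum_comp (Equiv.addRight k) e

theorem cyclicAverage_eq [NeZero K] {G : (Fin K → ℝ) → ℝ} {e : Fin K → ℝ}
    (h : ∀ i, G (e ∘ Equiv.addLeft i) = G e) : cyclicAverage G e = G e := by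
  rw [cyclicAverage, Finset.sum_congr rfl fun i _ => h i]
  simp [NeZero.ne K]

theorem cyclicAverage_le_cyclicAverage [NeZero K] {F G : (Fin K → ℝ) → ℝ}
    (hle : ∀ x, 0 ≤ x → F x ≤ G x) {e : Fin K → ℝ} (he : 0 ≤ e) :
    cyclicAverage F e ≤ cyclicAverage G e := by
  unfold cyclicAverage
  gcongr with i
  exact hle _ fun k => he (i + k)

theorem cyclicAverage_lt_cyclicAverage [NeZero K] {F G : (Fin K → ℝ) → ℝ}
    (hle : ∀ x, 0 ≤ x → F x ≤ G x) {e : Fin K → ℝ} (he : 0 ≤ e) (hlt : F e < G e) :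
    cyclicAverage F e < cyclicAverage G e := by
  refine div_lt_div_of_pos_right ?_ (by simp [Nat.pos_of_neZero K])
  refine Finset.sum_lt_sum (fun i _ => hle _ fun k => he (i + k)) ⟨0, Finset.mem_univ _, ?_⟩
  simpa using hlt

namespace IsEMerging

variable {F : (Fin K → ℝ) → ℝ}

/-- The e-merging property for a random vector taking finitely many values `v j` with
probabilities `w j`. -/
theorem sum_mul_le_one (hF : IsEMerging K F) {ι : Type} [Fintype ι]
    (w : ι → ℝ) (v : ι → Fin K → ℝ) (hw : ∀ j, 0 ≤ w j) (hw1 : ∑ j, w j = 1)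
    (hv : ∀ j, 0 ≤ v j) (hmean : ∀ k, ∑ j, w j * v j k ≤ 1) :
    ∑ j, w j * F (v j) ≤ 1 := by
  let : MeasurableSpace ι := ⊤
  let Q : Measure ι := ∑ j, ENNReal.ofReal (w j) • Measure.dirac j
  have hQ : ∀ g : ι → ℝ≥0∞, ∫⁻ x, g x ∂Q = ∑ j, ENNReal.ofReal (w j) * g j := fun g => by
    rw [lintegral_finsetSum_measure]
    refine Finset.sum_congr rfl fun j _ => ?_
    rw [lintegral_smul_measure, lintegral_dirac' _ measurable_from_top, smul_eq_mul]
  have hQprob : IsProbabilityMeasure Q := ⟨by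
    simpa [← ENNReal.ofReal_sum_of_nonneg fun j _ => hw j, hw1] using hQ 1⟩
  have hE := hF.2.2.2 ι Q hQprob (fun k j => v j k) (fun _ => measurable_from_top)
    (fun k j => hv j k) fun k => by
      rw [hQ, ← ENNReal.ofReal_sum_mul _ hw fun j => hv j k]
      exact ENNReal.ofReal_le_one.mpr (hmean k)
  rw [hQ, ← ENNReal.ofReal_sum_mul _ hw fun j => hF.2.2.1 _] at hE
  exact ENNReal.ofReal_le_one.mp hE

variable [NeZero K]

/-- Randomising each value `v j` over its cyclic rotations turns the condition on the
coordinates into a condition on the means. -/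
theorem sum_mul_cyclicAverage_le_one (hF : IsEMerging K F) {ι : Type} [Fintype ι]
    (w : ι → ℝ) (v : ι → Fin K → ℝ) (hw : ∀ j, 0 ≤ w j) (hw1 : ∑ j, w j = 1)
    (hv : ∀ j, 0 ≤ v j) (hmean : ∑ j, w j * arithMean (v j) ≤ 1) :
    ∑ j, w j * cyclicAverage F (v j) ≤ 1 := by
  have hK : (K : ℝ) ≠ 0 := by simp [NeZero.ne K]
  calc ∑ j, w j * cyclicAverage F (v j)
      = ∑ p : ι × Fin K, w p.1 / K * F (v p.1 ∘ Equiv.addLeft p.2) := by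
        rw [Fintype.sum_prod_type]
        refine Finset.sum_congr rfl fun j _ => ?_
        dsimp only
        rw [← Finset.mul_sum, cyclicAverage]
        ring
    _ ≤ 1 := by
      refine hF.sum_mul_le_one _ _ (fun p => div_nonneg (hw p.1) K.cast_nonneg)
        (by simp [Fintype.sum_prod_type, mul_div_cancel₀ _ hK, hw1])
        (fun p k => hv p.1 (p.2 + k)) fun k => le_of_eq_of_le ?_ hmean
      rw [Fintype.sum_prod_type]
      refine Finset.sum_congr rfl fun j _ => ?_
      simp only [Function.comp_apply, Equiv.coe_addLeft, ← Finset.mul_sum, Fin.sum_apply_add_right,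
        arithMean]
      ring

theorem mix_cyclicAverage_le_one (hF : IsEMerging K F) {e f : Fin K → ℝ} (he : 0 ≤ e)
    (hf : 0 ≤ f) {t : ℝ} (ht : t ∈ Set.Icc (0 : ℝ) 1)
    (hmean : t * arithMean e + (1 - t) * arithMean f ≤ 1) :
    t * cyclicAverage F e + (1 - t) * cyclicAverage F f ≤ 1 := by
  simpa using hF.sum_mul_cyclicAverage_le_one ![t, 1 - t] ![e, f]
    (by simp [Fin.forall_fin_two, ht.1, ht.2]) (by simp) (by simp [Fin.forall_fin_two, he, hf])
    (by simpa using hmean)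

theorem mix_le_one (hF : IsEMerging K F)
    (hsymm : ∀ (e : Fin K → ℝ) (σ : Equiv.Perm (Fin K)), F (e ∘ σ) = F e)
    {e f : Fin K → ℝ} (he : 0 ≤ e) (hf : 0 ≤ f) {t : ℝ} (ht : t ∈ Set.Icc (0 : ℝ) 1)
    (hmean : t * arithMean e + (1 - t) * arithMean f ≤ 1) :
    t * F e + (1 - t) * F f ≤ 1 := by
  simpa only [cyclicAverage_eq fun i => hsymm _ _] using
    hF.mix_cyclicAverage_le_one he hf ht hmean

theorem le_one_of_arithMean_le_one (hF : IsEMerging K F)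
    (hsymm : ∀ (e : Fin K → ℝ) (σ : Equiv.Perm (Fin K)), F (e ∘ σ) = F e)
    {e : Fin K → ℝ} (he : 0 ≤ e) (he1 : arithMean e ≤ 1) : F e ≤ 1 := by
  simpa using hF.mix_le_one hsymm he he ⟨zero_le_one, le_rfl⟩ (by simpa using he1)

theorem one_sub_arithMean_mul_le (hF : IsEMerging K F)
    (hsymm : ∀ (e : Fin K → ℝ) (σ : Equiv.Perm (Fin K)), F (e ∘ σ) = F e)
    {e f : Fin K → ℝ} (he : 0 ≤ e) (hf : 0 ≤ f) (hf1 : arithMean f ≤ 1)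
    (he1 : 1 ≤ arithMean e) :
    (1 - arithMean f) * (F e - arithMean e) ≤ (1 - arithMean e) * (F f - arithMean f) := by
  set a := arithMean e
  set b := arithMean f
  rcases (hf1.trans he1).eq_or_lt with hab | hab
  · have ha : a = 1 := le_antisymm (hab ▸ hf1) he1
    simp [hab, ha]
  -- mix `e` and `f` so that the mean is exactly `1`
  set t := (1 - b) / (a - b)
  have hab' : 0 < a - b := sub_pos.2 hab
  have ht : t * (a - b) = 1 - b := div_mul_cancel₀ _ hab'.ne'
  have hmix := hF.mix_le_one hsymm he hf (t := t)
    ⟨div_nonneg (by linarith) hab'.le, (div_le_one hab').2 (by linarith)⟩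
    (le_of_eq (by linear_combination ht))
  have key : (a - b) * (t * F e + (1 - t) * F f) = (1 - b) * F e + (a - 1) * F f := by
    linear_combination (F e - F f) * ht
  linarith [mul_le_mul_of_nonneg_left hmix hab'.le]

theorem exists_le_affine_arithMean (hF : IsEMerging K F)
    (hsymm : ∀ (e : Fin K → ℝ) (σ : Equiv.Perm (Fin K)), F (e ∘ σ) = F e) :
    ∃ l ∈ Set.Icc (0 : ℝ) 1, ∀ e, 0 ≤ e → F e ≤ l + (1 - l) * arithMean e := by
  obtain ⟨l, hl0, hl⟩ := exists_forall_le_mul_of_cross (s := Set.Ici 0)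
    (g := fun e => F e - arithMean e) (d := fun e => 1 - arithMean e)
    (fun f hf e he hf1 he1 => hF.one_sub_arithMean_mul_le hsymm he hf (by linarith) (by linarith))
    (x₀ := 0) Set.self_mem_Ici (by simp [arithMean]) (x₁ := fun _ => 2)
    (Set.mem_Ici.2 fun _ => zero_le_two)
    (by norm_num [arithMean_const])
  simp only [arithMean, Pi.zero_apply, Finset.sum_const_zero, zero_div, sub_zero, div_one]
    at hl0
  refine ⟨min l 1, ⟨le_min ((hF.2.2.1 0).trans hl0) zero_le_one, min_le_right _ _⟩,
    fun e he => ?_⟩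
  have hle := hl e he
  rcases le_total l 1 with h | h
  · rw [min_eq_left h]
    linarith
  rw [min_eq_right h, sub_self, zero_mul, add_zero]
  rcases le_total (arithMean e) 1 with h1 | h1
  · exact hF.le_one_of_arithMean_le_one hsymm he h1
  · nlinarith

end IsEMerging

theorem isEMerging_const_add_sum_mul_max {a : ℝ} {c : Fin K → ℝ} (ha : 0 ≤ a) (hc : 0 ≤ c)
    (h1 : a + ∑ k, c k ≤ 1) : IsEMerging K fun e => a + ∑ k, c k * max (e k) 0 := by
  have hsum : ∀ x : Fin K → ℝ, 0 ≤ ∑ k, c k * max (x k) 0 := fun x =>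
    Finset.sum_nonneg fun k _ => mul_nonneg (hc k) (le_max_right _ _)
  refine ⟨fun x y hxy => ?_, by fun_prop, fun e => add_nonneg ha (hsum e),
    fun Ω _ Q _ E hE hE0 hE1 => ?_⟩
  · dsimp only
    gcongr with k
    exacts [hc k, hxy k]
  calc ∫⁻ ω, ENNReal.ofReal (a + ∑ k, c k * max (E k ω) 0) ∂Q
      = ∫⁻ ω, ENNReal.ofReal a + ∑ k, ENNReal.ofReal (c k) * ENNReal.ofReal (E k ω) ∂Q := by
        refine lintegral_congr fun ω => ?_
        rw [ENNReal.ofReal_add ha (hsum _)]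
        simp only [max_eq_left (hE0 _ ω), ENNReal.ofReal_sum_mul _ hc (hE0 · ω)]
    _ = ENNReal.ofReal a + ∑ k, ENNReal.ofReal (c k) * ∫⁻ ω, ENNReal.ofReal (E k ω) ∂Q := by
        rw [lintegral_add_left measurable_const, lintegral_const, measure_univ, mul_one,
          lintegral_finsetSum' _ fun k _ => ((hE k).ennreal_ofReal.const_mul _).aemeasurable]
        simp only [lintegral_const_mul' _ _ ENNReal.ofReal_ne_top]
    _ ≤ ENNReal.ofReal a + ∑ k, ENNReal.ofReal (c k) * 1 := by
        gcongr with k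
        exact hE1 k
    _ = ENNReal.ofReal (a + ∑ k, c k) := by
        rw [ENNReal.ofReal_add ha (Finset.sum_nonneg fun k _ => hc k),
          ENNReal.ofReal_sum_of_nonneg fun k _ => hc k]
        simp
    _ ≤ 1 := ENNReal.ofReal_le_one.mpr h1

theorem isEMerging_affine_arithMean [NeZero K] {l : ℝ} (hl : l ∈ Set.Icc (0 : ℝ) 1) :
    IsEMerging K fun e => l + (1 - l) * arithMean (e ⊔ 0) := by
  convert isEMerging_const_add_sum_mul_max (c := fun _ : Fin K => (1 - l) / K) hl.1
    (fun _ => div_nonneg (sub_nonneg.2 hl.2) K.cast_nonneg)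
    (by simp [mul_div_cancel₀ _ (NeZero.ne (K : ℝ))]) using 3 with e
  rw [arithMean, Finset.sum_div, Finset.mul_sum]
  refine Finset.sum_congr rfl fun k _ => ?_
  simp only [Pi.sup_apply, Pi.zero_apply]
  ring

theorem IsAdmissibleEMerging.eq_of_le {F G : (Fin K → ℝ) → ℝ} (hF : IsAdmissibleEMerging K F)
    (hG : IsEMerging K G) (hle : ∀ e, 0 ≤ e → F e ≤ G e) : ∀ e, 0 ≤ e → F e = G e := by
  intro e he
  by_contra hne
  exact hF.2 ⟨G, hG, hle, e, he, lt_of_le_of_ne (hle e he) hne⟩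

theorem not_strictlyDominates_of_eq_affine [NeZero K] {F G : (Fin K → ℝ) → ℝ}
    (hG : IsEMerging K G) {l : ℝ} (hF : ∀ e, 0 ≤ e → F e = l + (1 - l) * arithMean e) :
    ¬ StrictlyDominates K G F := by
  rintro ⟨hle, e, he, hlt⟩
  set m := arithMean e
  have hm : 0 ≤ m := arithMean_nonneg he
  -- mix the rotations of `e` with the constant `c` so that every coordinate has mean `1`
  set t := 1 / (m + 2)
  set c := 2 / (m + 1)
  have hc : 0 ≤ fun _ : Fin K => c := fun _ => by positivity
  have ht : t ∈ Set.Icc (0 : ℝ) 1 := ⟨by positivity, (div_le_one (by positivity)).2 (by linarith)⟩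
  have hmix : t * m + (1 - t) * c = 1 := by
    simp only [t, c]
    field_simp
    ring
  have hF_rot : ∀ x, 0 ≤ x → cyclicAverage F x = F x := fun x hx =>
    cyclicAverage_eq fun i => by
      rw [hF (x ∘ Equiv.addLeft i) fun k => hx (i + k), hF x hx, arithMean_comp_perm]
  have hGe : F e < cyclicAverage G e :=
    hF_rot e he ▸ cyclicAverage_lt_cyclicAverage hle he hlt
  have hGc : F (fun _ => c) ≤ cyclicAverage G fun _ => c :=
    hF_rot _ hc ▸ cyclicAverage_le_cyclicAverage hle hc
  have hG1 := hG.mix_cyclicAverage_le_one he hc ht (by rw [arithMean_const, hmix])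
  have hF1 : t * F e + (1 - t) * F (fun _ => c) = 1 := by
    rw [hF e he, hF _ hc, arithMean_const]
    linear_combination (1 - l) * hmix
  linarith [mul_lt_mul_of_pos_left hGe (by positivity : 0 < t),
    mul_le_mul_of_nonneg_left hGc (sub_nonneg.2 ht.2)]

/-- every symmetric e-merging function `F` is dominated by
`λ + (1−λ)·M_K` for some `λ ∈ [0,1]`; moreover `F` is admissible iff
`F = λ + (1−λ)·M_K` on `[0,∞)^K` with `λ = F(0,…,0) ∈ [0,1]`. -/
theorem symmetric_e_merging_complete_class
    (K : ℕ) (hK : 2 ≤ K) (F : (Fin K → ℝ) → ℝ) (hF : IsEMerging K F)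
    (hsymm : ∀ (e : Fin K → ℝ) (σ : Equiv.Perm (Fin K)), F (e ∘ σ) = F e) :
    (∃ l ∈ Set.Icc (0:ℝ) 1, ∀ e : Fin K → ℝ, (∀ k, 0 ≤ e k) →
      F e ≤ l + (1 - l) * ((∑ k, e k) / K)) ∧
    (IsAdmissibleEMerging K F ↔
      (F (fun _ => 0) ∈ Set.Icc (0:ℝ) 1 ∧
        ∀ e : Fin K → ℝ, (∀ k, 0 ≤ e k) →
          F e = F (fun _ => 0) + (1 - F (fun _ => 0)) * ((∑ k, e k) / K))) := by
  have : NeZero K := ⟨by omega⟩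
  obtain ⟨l, hl, hdom⟩ := hF.exists_le_affine_arithMean hsymm
  refine ⟨⟨l, hl, hdom⟩, fun hadm => ?_, fun ⟨_, heq⟩ =>
    ⟨hF, fun ⟨G, hG, hGF⟩ => not_strictlyDominates_of_eq_affine hG heq hGF⟩⟩
  have heq := hadm.eq_of_le (isEMerging_affine_arithMean hl) fun e he => by
    simpa only [sup_of_le_left he] using hdom e he
  have h0 : F (fun _ => 0) = l := by
    simpa [arithMean] using heq (fun _ => 0) fun _ => le_rfl
  refine ⟨h0 ▸ hl, fun e he => ?_⟩
  rw [h0, heq e he, sup_of_le_left he]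
  rfl
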